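/- arXiv:1711.00390 — 2 statements merged into one kernel-verified Lean document; each statement's English description precedes it below -/
import Mathlib

section
/- With notation as in the context, for every $n \geq 1$: the rational function $w \mapsto J_n(w^{-1}, z_2, \dots, z_n)$, regarded as a rational function in the single variable $w$ over the field $F(z_2, \dots, z_n)$, has no pole at $w = 0$, and its value at $w = 0$ equals $q^r \cdot J_{n-1}(z_2, \dots, z_n)$. (This is the residue computation $\mathrm{Res}_{z_1 = \infty}\, J_n/z_1 = q^r J_{n-1}$ from the proof of Lemma 3.3 of the paper.) -/
open scoped BigOperators

noncomputable section

/-- `ζ(w) = (1 - w q₁)(1 - w q₂) / ((1 - w)(1 - w q₁ q₂))`. -/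
def zetaF {L : Type*} [Field L] (q₁ q₂ w : L) : L :=
  ((1 - w * q₁) * (1 - w * q₂)) / ((1 - w) * (1 - w * (q₁ * q₂)))

/-- The rational expression `J_n` of equation (3.34) of the paper, evaluated at
`z_1 = z 0, …, z_n = z (n-1)`, where `ι : F →+* L` embeds the field of constants.
(By convention `J_0 = 1`, which this definition satisfies as all products are empty.) -/
def Jfun {F L : Type*} [Field F] [Field L] (ι : F →+* L) (q₁ q₂ m : F)
    (r : ℕ) (x x' : Fin r → F) (n : ℕ) (z : ℕ → L) : L :=
  (ι q₁ * ι q₂) ^ (r * n) *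
    ((∏ i ∈ Finset.range (n - 1), (1 - ι q₁ * ι q₂ * z (i + 1) / z i)) *
      ∏ i ∈ Finset.range n, ∏ j ∈ Finset.Ico (i + 1) n, zetaF (ι q₁) (ι q₂) (z j / z i))⁻¹ *
    ∏ i ∈ Finset.range n,
      (∏ a : Fin r, (1 - ι (x' a) / (z i * (ι q₁ * ι q₂)))) /
        ∏ a : Fin r, (1 - ι m * ι (x a) / (z i * (ι q₁ * ι q₂)))

/-! Substituting `z₁ = w⁻¹`, every factor of `J_n` that involves `z₁` becomes a rational function
of `w` that is regular at `w = 0` with value `1`: `1 - q z₂ w`, `ζ(z_j w)` and `1 - c w / q`.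
The factors not involving `z₁` are exactly those of `J_{n-1}(z₂, …, z_n)`, up to one extra
`q^r`. Rational functions regular at `0` form a ring on which evaluation at `0` is multiplicative,
so it only remains to see that the denominator of `J_{n-1}` does not vanish, which holds because a
ratio of two distinct variables is not a constant. -/

namespace RatFunc

open Polynomial

variable {K : Type*} [Field K]

def HasValueAtZero (f : RatFunc K) (v : K) : Prop :=
  ∃ p q : K[X], q.eval 0 ≠ 0 ∧
    f = algebraMap K[X] (RatFunc K) p / algebraMap K[X] (RatFunc K) q ∧ p.eval 0 / q.eval 0 = v

private theorem algebraMap_ne_zero_of_eval_ne_zero {q : K[X]} (hq : q.eval 0 ≠ 0) :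
    algebraMap K[X] (RatFunc K) q ≠ 0 :=
  algebraMap_ne_zero fun h => hq (by simp [h])

theorem hasValueAtZero_iff {f : RatFunc K} {v : K} :
    HasValueAtZero f v ↔ f.denom.eval 0 ≠ 0 ∧ f.num.eval 0 / f.denom.eval 0 = v := by
  refine ⟨fun ⟨p, q, hq, hf, hv⟩ => ?_,
    fun ⟨hd, hv⟩ => ⟨f.num, f.denom, hd, (num_div_denom f).symm, hv⟩⟩
  have hq' : q ≠ 0 := fun h => hq (by simp [h])
  obtain ⟨s, hs⟩ := (denom_dvd hq').mpr ⟨p, hf⟩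
  have hd : f.denom.eval 0 ≠ 0 := left_ne_zero_of_mul (by rwa [hs, Polynomial.eval_mul] at hq)
  have hcross : f.num * q = p * f.denom := by
    have := (num_div_denom f).trans hf
    rw [div_eq_div_iff (algebraMap_ne_zero (denom_ne_zero f)) (algebraMap_ne_zero hq'),
      ← map_mul, ← map_mul] at this
    exact algebraMap_injective K this
  refine ⟨hd, ?_⟩
  rw [← hv, div_eq_div_iff hd hq, ← Polynomial.eval_mul, ← Polynomial.eval_mul, hcross]

theorem hasValueAtZero_algebraMap (p : K[X]) :
    HasValueAtZero (algebraMap K[X] (RatFunc K) p) (p.eval 0) :=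
  ⟨p, 1, by simp, by simp, by simp⟩

theorem hasValueAtZero_C (c : K) : HasValueAtZero (C c) c := by
  simpa using hasValueAtZero_algebraMap (Polynomial.C c)

theorem hasValueAtZero_X : HasValueAtZero (X : RatFunc K) 0 := by
  simpa using hasValueAtZero_algebraMap (Polynomial.X : K[X])

theorem hasValueAtZero_one : HasValueAtZero (1 : RatFunc K) 1 := by
  simpa using hasValueAtZero_C (1 : K)

namespace HasValueAtZero

variable {f g : RatFunc K} {a b : K}

theorem mul (hf : HasValueAtZero f a) (hg : HasValueAtZero g b) :
    HasValueAtZero (f * g) (a * b) := by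
  obtain ⟨p₁, q₁, hq₁, rfl, rfl⟩ := hf
  obtain ⟨p₂, q₂, hq₂, rfl, rfl⟩ := hg
  exact ⟨p₁ * p₂, q₁ * q₂, by simp [hq₁, hq₂], by simp [div_mul_div_comm],
    by simp [div_mul_div_comm]⟩

theorem sub (hf : HasValueAtZero f a) (hg : HasValueAtZero g b) :
    HasValueAtZero (f - g) (a - b) := by
  obtain ⟨p₁, q₁, hq₁, rfl, rfl⟩ := hf
  obtain ⟨p₂, q₂, hq₂, rfl, rfl⟩ := hg
  refine ⟨p₁ * q₂ - q₁ * p₂, q₁ * q₂, by simp [hq₁, hq₂], ?_, ?_⟩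
  · rw [div_sub_div _ _ (algebraMap_ne_zero_of_eval_ne_zero hq₁)
      (algebraMap_ne_zero_of_eval_ne_zero hq₂)]
    simp
  · rw [div_sub_div _ _ hq₁ hq₂]
    simp

theorem inv (hf : HasValueAtZero f a) (ha : a ≠ 0) : HasValueAtZero f⁻¹ a⁻¹ := by
  obtain ⟨p, q, hq, rfl, rfl⟩ := hf
  exact ⟨q, p, (div_ne_zero_iff.mp ha).1, by simp, by simp⟩

theorem div (hf : HasValueAtZero f a) (hg : HasValueAtZero g b) (hb : b ≠ 0) :
    HasValueAtZero (f / g) (a / b) := by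
  simpa only [div_eq_mul_inv] using hf.mul (hg.inv hb)

end HasValueAtZero

theorem hasValueAtZero_prod {ι : Type*} (s : Finset ι) {f : ι → RatFunc K} {v : ι → K}
    (h : ∀ i ∈ s, HasValueAtZero (f i) (v i)) : HasValueAtZero (∏ i ∈ s, f i) (∏ i ∈ s, v i) := by
  classical
  induction s using Finset.induction_on with
  | empty => simpa using hasValueAtZero_one
  | insert i s hi ih =>
    rw [Finset.prod_insert hi, Finset.prod_insert hi]
    exact (h i (Finset.mem_insert_self i s)).mul
      (ih fun j hj => h j (Finset.mem_insert_of_mem hj))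

end RatFunc

open Finset RatFunc

section zeta

variable {L : Type*} [Field L]

@[simp]
theorem zetaF_zero (a b : L) : zetaF a b 0 = 1 := by
  simp [zetaF]

@[simp]
theorem map_zetaF {L' : Type*} [Field L'] (φ : L →+* L') (a b w : L) :
    φ (zetaF a b w) = zetaF (φ a) (φ b) (φ w) := by
  simp [zetaF]

theorem RatFunc.HasValueAtZero.zetaF {w : RatFunc L} {ω : L} (hw : HasValueAtZero w ω)
    (a b : L) (h₁ : 1 - ω ≠ 0) (h₂ : 1 - ω * (a * b) ≠ 0) :
    HasValueAtZero (zetaF (C a) (C b) w) (zetaF a b ω) :=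
  ((hasValueAtZero_one.sub (hw.mul (hasValueAtZero_C a))).mul
    (hasValueAtZero_one.sub (hw.mul (hasValueAtZero_C b)))).div
    ((hasValueAtZero_one.sub hw).mul
      (hasValueAtZero_one.sub (hw.mul ((hasValueAtZero_C a).mul (hasValueAtZero_C b)))))
    (mul_ne_zero h₁ h₂)

end zeta

section Jfun

variable {F L : Type*} [Field F] [Field L] (ι : F →+* L) (q₁ q₂ m : F) (r : ℕ)
  (x x' : Fin r → F)

def jDenom (n : ℕ) (z : ℕ → L) : L :=
  (∏ i ∈ range (n - 1), (1 - ι q₁ * ι q₂ * z (i + 1) / z i)) *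
    ∏ i ∈ range n, ∏ j ∈ Ico (i + 1) n, zetaF (ι q₁) (ι q₂) (z j / z i)

def jFactor (t : L) : L :=
  (∏ a : Fin r, (1 - ι (x' a) / (t * (ι q₁ * ι q₂)))) /
    ∏ a : Fin r, (1 - ι m * ι (x a) / (t * (ι q₁ * ι q₂)))

theorem Jfun_eq (n : ℕ) (z : ℕ → L) :
    Jfun ι q₁ q₂ m r x x' n z =
      (ι q₁ * ι q₂) ^ (r * n) * (jDenom ι q₁ q₂ n z)⁻¹ *
        ∏ i ∈ range n, jFactor ι q₁ q₂ m r x x' (z i) :=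
  rfl

theorem Jfun_congr {n : ℕ} {z z' : ℕ → L} (h : ∀ j < n, z j = z' j) :
    Jfun ι q₁ q₂ m r x x' n z = Jfun ι q₁ q₂ m r x x' n z' := by
  have hden : jDenom ι q₁ q₂ n z = jDenom ι q₁ q₂ n z' := by
    unfold jDenom
    congr 1
    · refine prod_congr rfl fun i hi => ?_
      rw [mem_range] at hi
      rw [h i (by omega), h (i + 1) (by omega)]
    · refine prod_congr rfl fun i hi => prod_congr rfl fun j hj => ?_
      rw [mem_range] at hi
      rw [h i hi, h j (mem_Ico.mp hj).2]
  rw [Jfun_eq, Jfun_eq, hden, prod_congr rfl fun i hi => by rw [h i (mem_range.mp hi)]]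

theorem jDenom_ne_zero {n : ℕ} {z : ℕ → L}
    (hz : ∀ i j, i < j → j < n → z j / z i ∉ Set.range ι) : jDenom ι q₁ q₂ n z ≠ 0 := by
  have key : ∀ i j, i < j → j < n → ∀ c, 1 - z j / z i * ι c ≠ 0 := by
    intro i j hij hj c h
    have hc : ι c ≠ 0 := fun h0 => by simp [h0] at h
    refine hz i j hij hj ⟨c⁻¹, ?_⟩
    rw [map_inv₀, eq_comm, ← mul_inv_eq_one₀ (inv_ne_zero hc), inv_inv]
    linear_combination -h
  unfold jDenom zetaF
  refine mul_ne_zero (prod_ne_zero_iff.mpr fun i hi => ?_)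
    (prod_ne_zero_iff.mpr fun i _ => prod_ne_zero_iff.mpr fun j hj => ?_)
  · rw [mem_range] at hi
    convert key i (i + 1) (by omega) (by omega) (q₁ * q₂) using 1
    rw [map_mul]
    ring
  · rw [mem_Ico] at hj
    have h := key i j (by omega) hj.2
    refine div_ne_zero (mul_ne_zero (h q₁) (h q₂)) (mul_ne_zero (by simpa using h 1) ?_)
    simpa using h (q₁ * q₂)

end Jfun

section invXCons

variable {F K : Type*} [Field F] [Field K] (ι : F →+* K) (q₁ q₂ m : F) (r : ℕ)
  (x x' : Fin r → F)

def invXCons (z : ℕ → K) : ℕ → RatFunc K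
  | 0 => X⁻¹
  | i + 1 => C (z i)

theorem hasValueAtZero_jDenom_invXCons (k : ℕ) (z : ℕ → K) :
    HasValueAtZero (jDenom (C.comp ι) q₁ q₂ (k + 1) (invXCons z)) (jDenom ι q₁ q₂ k z) := by
  unfold jDenom
  refine HasValueAtZero.mul ?_ ?_
  · rw [Nat.add_sub_cancel]
    cases k with
    | zero => simpa using hasValueAtZero_one
    | succ k =>
      rw [prod_range_succ', Nat.add_sub_cancel]
      simpa [invXCons, map_prod] using
        (hasValueAtZero_C (∏ i ∈ range k, (1 - ι q₁ * ι q₂ * z (i + 1) / z i))).mul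
          (hasValueAtZero_one.sub
            ((hasValueAtZero_C (ι q₁ * ι q₂ * z 0)).mul hasValueAtZero_X))
  · rw [prod_range_succ']
    simp only [← prod_Ico_add' (M := RatFunc K) _ _ k 1]
    simpa [invXCons, map_prod] using
      (hasValueAtZero_C
        (∏ i ∈ range k, ∏ j ∈ Ico (i + 1) k, zetaF (ι q₁) (ι q₂) (z j / z i))).mul
        (hasValueAtZero_prod (Ico 0 k) fun j _ =>
          ((hasValueAtZero_C (z j)).mul hasValueAtZero_X).zetaF (ι q₁) (ι q₂)
            (by simp) (by simp))

theorem hasValueAtZero_one_sub_div_invX_mul (c d : K) :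
    HasValueAtZero (1 - C c / (X⁻¹ * C d)) 1 := by
  have h : C c / (X⁻¹ * C d) = C (c / d) * X := by
    rw [div_mul_eq_div_div_swap, div_inv_eq_mul, map_div₀]
  simpa [h] using hasValueAtZero_one.sub ((hasValueAtZero_C (c / d)).mul hasValueAtZero_X)

theorem hasValueAtZero_jFactor_invX :
    HasValueAtZero (jFactor (C.comp ι) q₁ q₂ m r x x' X⁻¹) 1 := by
  simp only [jFactor, RingHom.comp_apply]
  have hprod (c d : Fin r → K) : HasValueAtZero (∏ a, (1 - C (c a) / (X⁻¹ * C (d a)))) 1 := by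
    simpa using
      hasValueAtZero_prod univ fun a _ => hasValueAtZero_one_sub_div_invX_mul (c a) (d a)
  simpa using (hprod (fun a => ι (x' a)) fun _ => ι q₁ * ι q₂).div
    (hprod (fun a => ι m * ι (x a)) fun _ => ι q₁ * ι q₂) one_ne_zero

theorem hasValueAtZero_Jfun_invXCons {k : ℕ} {z : ℕ → K} (hz : jDenom ι q₁ q₂ k z ≠ 0) :
    HasValueAtZero (Jfun (C.comp ι) q₁ q₂ m r x x' (k + 1) (invXCons z))
      ((ι q₁ * ι q₂) ^ r * Jfun ι q₁ q₂ m r x x' k z) := by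
  have hfactors :
      HasValueAtZero (∏ i ∈ range (k + 1), jFactor (C.comp ι) q₁ q₂ m r x x' (invXCons z i))
        (∏ i ∈ range k, jFactor ι q₁ q₂ m r x x' (z i)) := by
    rw [prod_range_succ']
    simpa [invXCons, jFactor, map_prod] using
      (hasValueAtZero_C (∏ i ∈ range k, jFactor ι q₁ q₂ m r x x' (z i))).mul
        (hasValueAtZero_jFactor_invX ι q₁ q₂ m r x x')
  rw [Jfun_eq, Jfun_eq]
  convert ((hasValueAtZero_C ((ι q₁ * ι q₂) ^ (r * (k + 1)))).mul
    ((hasValueAtZero_jDenom_invXCons ι q₁ q₂ k z).inv hz)).mul hfactors using 1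
  · simp
  · ring

end invXCons

theorem MvPolynomial.algebraMap_X_div_X_notMem_range {F σ : Type*} [Field F] {i j : σ}
    (hij : i ≠ j) :
    algebraMap (MvPolynomial σ F) (FractionRing (MvPolynomial σ F)) (X j) /
        algebraMap (MvPolynomial σ F) (FractionRing (MvPolynomial σ F)) (X i) ∉
      Set.range ((algebraMap (MvPolynomial σ F) (FractionRing (MvPolynomial σ F))).comp C) := by
  classical
  rintro ⟨c, hc⟩
  have hXi : algebraMap (MvPolynomial σ F) (FractionRing (MvPolynomial σ F)) (X i) ≠ 0 :=
    (map_ne_zero_iff _ (IsFractionRing.injective _ _)).mpr (X_ne_zero i)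
  rw [RingHom.comp_apply, eq_div_iff hXi, ← map_mul] at hc
  have hcoeff := congrArg (coeff (Finsupp.single j 1)) (IsFractionRing.injective _ _ hc)
  rw [coeff_C_mul, coeff_X, coeff_X, if_pos rfl,
    if_neg fun h => hij (Finsupp.single_left_injective one_ne_zero h)] at hcoeff
  simp at hcoeff

theorem stmt_5_general {F : Type} [Field F] (r : ℕ) (q₁ q₂ m : F)
    (x x' : Fin r → F) (n : ℕ) (hn : 1 ≤ n) :
    -- `K = F(z_2, …, z_n)`, the rational function field in the variables other than `z_1`
    let K := FractionRing (MvPolynomial {j : ℕ // j < n ∧ j ≠ 0} F)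
    let ιK : F →+* K :=
      (algebraMap (MvPolynomial {j : ℕ // j < n ∧ j ≠ 0} F) K).comp MvPolynomial.C
    let Z : {j : ℕ // j < n ∧ j ≠ 0} → K := fun s =>
      algebraMap (MvPolynomial {j : ℕ // j < n ∧ j ≠ 0} F) K (MvPolynomial.X s)
    -- `w ↦ J_n(w⁻¹, z_2, …, z_n)`, a one-variable rational function in `w` over `K`
    let Jn : RatFunc K := Jfun ((RatFunc.C).comp ιK) q₁ q₂ m r x x' n
      (fun j => if h : j < n ∧ j ≠ 0 then RatFunc.C (Z ⟨j, h⟩) else RatFunc.X⁻¹)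
    -- `J_{n-1}(z_2, …, z_n)`, an element of `K`
    let Jprev : K := Jfun ιK q₁ q₂ m r x x' (n - 1)
      (fun j => if h : j + 1 < n ∧ j + 1 ≠ 0 then Z ⟨j + 1, h⟩ else 1)
    -- no pole at `w = 0`, and the value there is `q^r ⬝ J_{n-1}(z_2, …, z_n)`
    Polynomial.eval 0 (RatFunc.denom Jn) ≠ 0 ∧
      Polynomial.eval 0 (RatFunc.num Jn) / Polynomial.eval 0 (RatFunc.denom Jn) =
        ιK ((q₁ * q₂) ^ r) * Jprev := by
  obtain ⟨k, rfl⟩ : ∃ k, n = k + 1 := ⟨n - 1, by omega⟩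
  intro K ιK Z Jn Jprev
  set u : ℕ → K := fun j => if h : j + 1 < k + 1 ∧ j + 1 ≠ 0 then Z ⟨j + 1, h⟩ else 1
  have hJn : Jn = Jfun (C.comp ιK) q₁ q₂ m r x x' (k + 1) (invXCons u) :=
    Jfun_congr (C.comp ιK) q₁ q₂ m r x x' fun j hj => by
      cases j with
      | zero => simp [invXCons]
      | succ j => simp [invXCons, u, hj, show j < k by omega]
  have hratio : ∀ i j, i < j → j < k → u j / u i ∉ Set.range ιK := by
    intro i j hij hj
    simp only [u, dif_pos (⟨by omega, by omega⟩ : j + 1 < k + 1 ∧ j + 1 ≠ 0),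
      dif_pos (⟨by omega, by omega⟩ : i + 1 < k + 1 ∧ i + 1 ≠ 0)]
    exact MvPolynomial.algebraMap_X_div_X_notMem_range (by simp; omega)
  have hval :=
    hasValueAtZero_Jfun_invXCons ιK q₁ q₂ m r x x' (jDenom_ne_zero ιK q₁ q₂ hratio)
  rw [← hJn] at hval
  simpa [Jprev, u] using hasValueAtZero_iff.mp hval

/-- The rational function `w ↦ J_n(w⁻¹, z_2, …, z_n)`, regarded as a
rational function in the single variable `w` over the field `F(z_2, …, z_n)`, has no pole
at `w = 0`, and its value at `w = 0` equals `q^r ⬝ J_{n-1}(z_2, …, z_n)`. -/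
theorem stmt_5 {F : Type} [Field F] (r : ℕ) (hr : 1 ≤ r) (q₁ q₂ m : F)
    (x x' : Fin r → F) (hq₁ : q₁ ≠ 0) (hq₂ : q₂ ≠ 0) (hm : m ≠ 0)
    (hx : ∀ a, x a ≠ 0) (hx' : ∀ a, x' a ≠ 0) (n : ℕ) (hn : 1 ≤ n) :
    -- `K = F(z_2, …, z_n)`, the rational function field in the variables other than `z_1`
    let K := FractionRing (MvPolynomial {j : ℕ // j < n ∧ j ≠ 0} F)
    let ιK : F →+* K :=
      (algebraMap (MvPolynomial {j : ℕ // j < n ∧ j ≠ 0} F) K).comp MvPolynomial.C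
    let Z : {j : ℕ // j < n ∧ j ≠ 0} → K := fun s =>
      algebraMap (MvPolynomial {j : ℕ // j < n ∧ j ≠ 0} F) K (MvPolynomial.X s)
    -- `w ↦ J_n(w⁻¹, z_2, …, z_n)`, a one-variable rational function in `w` over `K`
    let Jn : RatFunc K := Jfun ((RatFunc.C).comp ιK) q₁ q₂ m r x x' n
      (fun j => if h : j < n ∧ j ≠ 0 then RatFunc.C (Z ⟨j, h⟩) else RatFunc.X⁻¹)
    -- `J_{n-1}(z_2, …, z_n)`, an element of `K`
    let Jprev : K := Jfun ιK q₁ q₂ m r x x' (n - 1)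
      (fun j => if h : j + 1 < n ∧ j + 1 ≠ 0 then Z ⟨j + 1, h⟩ else 1)
    -- no pole at `w = 0`, and the value there is `q^r ⬝ J_{n-1}(z_2, …, z_n)`
    Polynomial.eval 0 (RatFunc.denom Jn) ≠ 0 ∧
      Polynomial.eval 0 (RatFunc.num Jn) / Polynomial.eval 0 (RatFunc.denom Jn) =
        ιK ((q₁ * q₂) ^ r) * Jprev :=
  stmt_5_general r q₁ q₂ m x x' n hn
end
end

section
/- With notation as in the context, for every $n \geq 2$: (i) for each $1 \leq i \leq n-1$, the function $J_n$, regarded as a rational function in the single variable $z_i$ over the field generated by the remaining variables, has no pole at $z_i = 0$ and its value at $z_i = 0$ equals $0$; (ii) for each $2 \leq i \leq n$, the rational function in $w$ obtained from $J_n$ by substituting $z_i = w^{-1}$ has no pole at $w = 0$ and its value at $w = 0$ equals $0$. (This is the claim in the proof of Lemma 3.3 that all residues of $J_n$ at $0$ and $\infty$ vanish, except those at $z_n = 0$ and $z_1 = \infty$.) -/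
/-!
Write `J_n = q^{rn} (A B)⁻¹ W`, where `A = ∏ (1 - q z_{i+1}/z_i)`, `B = ∏ ζ(z_j/z_i)` and `W` is
the product of the weights. When `z_i → 0` (`i < n`) the factor `1 - q z_{i+1}/z_i` of `A` has a
simple pole, and when `z_i → ∞` (`i > 1`) so does `1 - q z_i/z_{i-1}`; this pole in the inverted
bracket is what makes `J_n` vanish. Every other ratio `u = z_j/z_i` tends to `0`, tends to `∞`,
or is the ratio of two distinct independent variables, hence never tends to a nonzero constant;
so `1 - q u` and `ζ(u)` are units at the point (at `∞` via `ζ_{q₁,q₂}(1/u) = ζ_{1/q₁,1/q₂}(u)`).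
The weights stay regular, the one of `z_i → 0` because `m x_a ≠ 0`.
-/
open scoped BigOperators

noncomputable section

theorem zetaF_inv {L : Type*} [Field L] {q₁ q₂ : L} (h₁ : q₁ ≠ 0) (h₂ : q₂ ≠ 0) (w : L) :
    zetaF q₁ q₂ w⁻¹ = zetaF q₁⁻¹ q₂⁻¹ w := by
  rcases eq_or_ne w 0 with rfl | hw
  · simp [zetaF]
  have hk : q₁ * q₂ * w⁻¹ ^ 2 ≠ 0 := by simp [*]
  have hnum : (1 - w⁻¹ * q₁) * (1 - w⁻¹ * q₂) =
      q₁ * q₂ * w⁻¹ ^ 2 * ((1 - w * q₁⁻¹) * (1 - w * q₂⁻¹)) := by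
    field_simp; ring
  have hden : (1 - w⁻¹) * (1 - w⁻¹ * (q₁ * q₂)) =
      q₁ * q₂ * w⁻¹ ^ 2 * ((1 - w) * (1 - w * (q₁⁻¹ * q₂⁻¹))) := by
    field_simp; ring
  rw [zetaF, zetaF, hnum, hden, mul_div_mul_left _ _ hk]

theorem one_sub_mul_ne_zero_of_ne_map {F K : Type*} [Field F] [Field K] {ι : F →+* K} {v : K}
    (hv : ∀ c, c ≠ 0 → v ≠ ι c) (c : F) : 1 - v * ι c ≠ 0 := by
  rcases eq_or_ne c 0 with rfl | hc
  · simp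
  refine fun h => hv c⁻¹ (inv_ne_zero hc) ?_
  rw [map_inv₀]
  exact eq_inv_of_mul_eq_one_left (sub_eq_zero.mp h).symm

namespace RatFunc

variable {K : Type*} [Field K] {a : K} {f g : RatFunc K} {u v : K}

/-- `num f` and `denom f` are coprime, so this says that `f` has no pole at `a`. -/
def RegularAt (a : K) (f : RatFunc K) : Prop :=
  (denom f).eval a ≠ 0

def HasValueAt (a : K) (f : RatFunc K) (v : K) : Prop :=
  RegularAt a f ∧ eval (RingHom.id K) a f = v

def IsUnitAt (a : K) (f : RatFunc K) : Prop :=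
  RegularAt a f ∧ eval (RingHom.id K) a f ≠ 0

theorem RegularAt.hasValueAt (hf : RegularAt a f) : HasValueAt a f (eval (RingHom.id K) a f) :=
  ⟨hf, rfl⟩

theorem HasValueAt.isUnitAt (hf : HasValueAt a f v) (hv : v ≠ 0) : IsUnitAt a f :=
  ⟨hf.1, hf.2 ▸ hv⟩

theorem hasValueAt_C (c : K) : HasValueAt a (C c) c :=
  ⟨by simp [RegularAt], by simp⟩

theorem hasValueAt_X : HasValueAt a X a :=
  ⟨by simp [RegularAt], by simp⟩

theorem hasValueAt_one : HasValueAt a 1 1 := by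
  simpa using hasValueAt_C (a := a) 1

theorem HasValueAt.mul (hf : HasValueAt a f u) (hg : HasValueAt a g v) :
    HasValueAt a (f * g) (u * v) := by
  refine ⟨fun h => ?_, by rw [eval_mul _ _ hf.1 hg.1, hf.2, hg.2]⟩
  have := Polynomial.eval_eq_zero_of_dvd_of_eval_eq_zero (denom_mul_dvd f g) h
  exact mul_ne_zero hf.1 hg.1 (by rwa [Polynomial.eval_mul] at this)

theorem HasValueAt.add (hf : HasValueAt a f u) (hg : HasValueAt a g v) :
    HasValueAt a (f + g) (u + v) := by
  refine ⟨fun h => ?_, by rw [eval_add _ _ hf.1 hg.1, hf.2, hg.2]⟩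
  have := Polynomial.eval_eq_zero_of_dvd_of_eval_eq_zero (denom_add_dvd f g) h
  exact mul_ne_zero hf.1 hg.1 (by rwa [Polynomial.eval_mul] at this)

theorem HasValueAt.sub (hf : HasValueAt a f u) (hg : HasValueAt a g v) :
    HasValueAt a (f - g) (u - v) := by
  simpa [sub_eq_add_neg] using hf.add ((hasValueAt_C (-1)).mul hg)

theorem HasValueAt.inv (hf : HasValueAt a f v) (hv : v ≠ 0) : HasValueAt a f⁻¹ v⁻¹ := by
  have hf0 : f ≠ 0 := by rintro rfl; exact hv (by simpa using hf.2.symm)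
  have hnum : (num f).eval a ≠ 0 := fun h => hv (by simp [← hf.2, RatFunc.eval, h])
  have hreg : RegularAt a f⁻¹ := fun h =>
    hnum (Polynomial.eval_eq_zero_of_dvd_of_eval_eq_zero (denom_inv_dvd hf0) h)
  refine ⟨hreg, eq_inv_of_mul_eq_one_right ?_⟩
  rw [← hf.2, ← eval_mul _ _ hf.1 hreg, mul_inv_cancel₀ hf0, eval_one]

theorem HasValueAt.div (hf : HasValueAt a f u) (hg : HasValueAt a g v) (hv : v ≠ 0) :
    HasValueAt a (f / g) (u / v) := by
  simpa [div_eq_mul_inv] using hf.mul (hg.inv hv)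

theorem RegularAt.mul (hf : RegularAt a f) (hg : RegularAt a g) : RegularAt a (f * g) :=
  (hf.hasValueAt.mul hg.hasValueAt).1

theorem IsUnitAt.mul (hf : IsUnitAt a f) (hg : IsUnitAt a g) : IsUnitAt a (f * g) :=
  (hf.1.hasValueAt.mul hg.1.hasValueAt).isUnitAt (mul_ne_zero hf.2 hg.2)

theorem IsUnitAt.inv (hf : IsUnitAt a f) : IsUnitAt a f⁻¹ :=
  (hf.1.hasValueAt.inv hf.2).isUnitAt (inv_ne_zero hf.2)

theorem IsUnitAt.regularAt (hf : IsUnitAt a f) : RegularAt a f := hf.1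

theorem RegularAt.prod {ι : Type*} {s : Finset ι} {f : ι → RatFunc K}
    (h : ∀ i ∈ s, RegularAt a (f i)) : RegularAt a (∏ i ∈ s, f i) :=
  Finset.prod_induction f _ (fun _ _ => RegularAt.mul) hasValueAt_one.1 h

theorem IsUnitAt.prod {ι : Type*} {s : Finset ι} {f : ι → RatFunc K}
    (h : ∀ i ∈ s, IsUnitAt a (f i)) : IsUnitAt a (∏ i ∈ s, f i) :=
  Finset.prod_induction f _ (fun _ _ => IsUnitAt.mul) (hasValueAt_one.isUnitAt one_ne_zero) h

theorem hasValueAt_zero_mul_inv_mul {P c U W : RatFunc K} (hP : RegularAt 0 P)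
    (hc : IsUnitAt 0 (X * c)) (hU : IsUnitAt 0 U) (hW : RegularAt 0 W) :
    HasValueAt 0 (P * (c * U)⁻¹ * W) 0 := by
  have hJ : P * (c * U)⁻¹ * W = X * (P * (X * c)⁻¹ * U⁻¹ * W) := by
    linear_combination (-(P * c⁻¹ * U⁻¹ * W)) * mul_inv_cancel₀ (X_ne_zero (K := K))
  rw [hJ]
  simpa using hasValueAt_X.mul (((hP.mul hc.inv.regularAt).mul hU.inv.regularAt).mul hW).hasValueAt

theorem HasValueAt.zetaF {q₁ q₂ : K} (hf : HasValueAt a f v)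
    (hv : (1 - v) * (1 - v * (q₁ * q₂)) ≠ 0) :
    HasValueAt a (zetaF (C q₁) (C q₂) f) (zetaF q₁ q₂ v) :=
  (((hasValueAt_one.sub (hf.mul (hasValueAt_C q₁))).mul
    (hasValueAt_one.sub (hf.mul (hasValueAt_C q₂)))).div
    ((hasValueAt_one.sub hf).mul
      (hasValueAt_one.sub (hf.mul ((hasValueAt_C q₁).mul (hasValueAt_C q₂))))) hv)

variable {F : Type*} [Field F] {ι : F →+* K}

/-- For such `f`, every factor `1 - c f` and `ζ(f)` of `J_n` is a unit at `a`. -/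
def IsGenericAt (ι : F →+* K) (a : K) (f : RatFunc K) : Prop :=
  ∃ v, HasValueAt a f v ∧ ∀ c, c ≠ 0 → v ≠ ι c

theorem IsGenericAt.isUnitAt_one_sub_C_mul (hf : IsGenericAt ι a f) (c : F) :
    IsUnitAt a (1 - C (ι c) * f) := by
  obtain ⟨v, hf, hv⟩ := hf
  refine (hasValueAt_one.sub ((hasValueAt_C _).mul hf)).isUnitAt ?_
  rw [mul_comm]
  exact one_sub_mul_ne_zero_of_ne_map hv c

theorem IsGenericAt.isUnitAt_zetaF (hf : IsGenericAt ι a f) (c₁ c₂ : F) :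
    IsUnitAt a (zetaF (C (ι c₁)) (C (ι c₂)) f) := by
  obtain ⟨v, hf, hv⟩ := hf
  have h := one_sub_mul_ne_zero_of_ne_map hv
  have hden : (1 - v) * (1 - v * (ι c₁ * ι c₂)) ≠ 0 := by
    simpa using mul_ne_zero (h 1) (h (c₁ * c₂))
  exact (hf.zetaF hden).isUnitAt (div_ne_zero (mul_ne_zero (h c₁) (h c₂)) hden)

theorem IsGenericAt.isUnitAt_zetaF_of_inv (hf : IsGenericAt ι a f⁻¹) {c₁ c₂ : F}
    (h₁ : c₁ ≠ 0) (h₂ : c₂ ≠ 0) : IsUnitAt a (zetaF (C (ι c₁)) (C (ι c₂)) f) := by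
  simpa [zetaF_inv, h₁, h₂] using hf.isUnitAt_zetaF c₁⁻¹ c₂⁻¹

theorem isGenericAt_C_div_C {u v : K} (h : ∀ c, u / v ≠ ι c) : IsGenericAt ι a (C u / C v) :=
  ⟨u / v, by simpa using hasValueAt_C (u / v), fun c _ => h c⟩

theorem isGenericAt_of_hasValueAt_zero (hf : HasValueAt a f 0) : IsGenericAt ι a f :=
  ⟨0, hf, fun _ hc => ((map_ne_zero ι).mpr hc).symm⟩

theorem isGenericAt_X_div_C {v : K} (hv : v ≠ 0) : IsGenericAt ι 0 (X / C v) :=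
  isGenericAt_of_hasValueAt_zero (by simpa using hasValueAt_X.div (hasValueAt_C (a := 0) v) hv)

theorem isGenericAt_C_div_X_inv (v : K) : IsGenericAt ι 0 (C v / X⁻¹) :=
  isGenericAt_of_hasValueAt_zero (by simpa using (hasValueAt_C (a := 0) v).mul hasValueAt_X)

theorem isUnitAt_X_mul_one_sub_C_mul {c d : K} (hc : c ≠ 0) (hd : d ≠ 0) :
    IsUnitAt 0 (X * (1 - C c * (C d * X)⁻¹)) := by
  have h : X * (1 - C c * (C d * X)⁻¹) = X - C (c / d) := by
    have : (C d : RatFunc K) ≠ 0 := by simpa using hd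
    rw [map_div₀]
    field_simp [X_ne_zero]
  rw [h]
  exact (hasValueAt_X.sub (hasValueAt_C _)).isUnitAt (by simp [hc, hd])

theorem regularAt_weight_C {a : K} (b e w Q : K) :
    RegularAt a ((1 - C b / (C w * C Q)) / (1 - C e / (C w * C Q))) := by
  simpa only [map_div₀, map_sub, map_one, map_mul] using
    (hasValueAt_C (a := a) ((1 - b / (w * Q)) / (1 - e / (w * Q)))).1

theorem regularAt_weight_X {b e Q : K} (he : e ≠ 0) (hQ : Q ≠ 0) :
    RegularAt 0 ((1 - C b / (X * C Q)) / (1 - C e / (X * C Q))) := by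
  have hXQ : X * C Q ≠ 0 := mul_ne_zero X_ne_zero (by simpa using hQ)
  have h : ∀ f : RatFunc K, 1 - f / (X * C Q) = (X * C Q - f) / (X * C Q) := fun f => by
    rw [sub_div, div_self hXQ]
  rw [h, h, div_div_div_cancel_right₀ hXQ]
  refine (((hasValueAt_X.mul (hasValueAt_C Q)).sub (hasValueAt_C b)).div
    ((hasValueAt_X.mul (hasValueAt_C Q)).sub (hasValueAt_C e)) ?_).1
  simpa using he

theorem regularAt_weight_X_inv {b e Q : K} (hQ : Q ≠ 0) :
    RegularAt 0 ((1 - C b / (X⁻¹ * C Q)) / (1 - C e / (X⁻¹ * C Q))) := by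
  have h : ∀ f : K, C f / (X⁻¹ * C Q) = C (f / Q) * X := fun f => by
    have : (C Q : RatFunc K) ≠ 0 := by simpa using hQ
    rw [map_div₀]
    field_simp [X_ne_zero]
  rw [h, h]
  refine ((hasValueAt_one.sub ((hasValueAt_C _).mul hasValueAt_X)).div
    (hasValueAt_one.sub ((hasValueAt_C _).mul hasValueAt_X)) ?_).1
  simp

end RatFunc

namespace MvPolynomial

variable {R σ K : Type*} [CommRing R] [IsDomain R] [Field K] [Algebra (MvPolynomial σ R) K]
  [IsFractionRing (MvPolynomial σ R) K]

theorem algebraMap_X_ne_zero (s : σ) : algebraMap (MvPolynomial σ R) K (X s) ≠ 0 :=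
  (map_ne_zero_iff _ (IsFractionRing.injective _ K)).mpr (X_ne_zero s)

theorem algebraMap_X_div_X_ne {s t : σ} (hst : s ≠ t) (a : R) :
    algebraMap (MvPolynomial σ R) K (X t) / algebraMap (MvPolynomial σ R) K (X s) ≠
      algebraMap (MvPolynomial σ R) K (C a) := by
  intro h
  rw [div_eq_iff (algebraMap_X_ne_zero s), ← map_mul] at h
  have h := IsFractionRing.injective _ K h
  rw [X, X, C_mul_monomial, mul_one, monomial_eq_monomial_iff] at h
  rcases h with ⟨h, -⟩ | ⟨h, -⟩
  · exact hst (Finsupp.single_left_injective one_ne_zero h).symm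
  · exact one_ne_zero h

end MvPolynomial

section Jfun

open RatFunc Finset

variable {F K : Type*} [Field F] [Field K] {ι : F →+* K} {q₁ q₂ m : F} {r n : ℕ}
  {x x' : Fin r → F} {z : ℕ → RatFunc K}

theorem hasValueAt_zero_Jfun {p : ℕ} (hq₁ : q₁ ≠ 0) (hq₂ : q₂ ≠ 0) (hp : p < n - 1) {d : K}
    (hd : d ≠ 0) (hpole : z p / z (p + 1) = C d * X)
    (hchain : ∀ i < n - 1, i ≠ p → IsGenericAt ι 0 (z (i + 1) / z i))
    (hzeta : ∀ i j, i < j → j < n → IsGenericAt ι 0 (z j / z i) ∨ IsGenericAt ι 0 (z i / z j))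
    (hweight : ∀ i < n, ∀ a, RegularAt 0
      ((1 - C (ι (x' a)) / (z i * (C (ι q₁) * C (ι q₂)))) /
        (1 - C (ι m) * C (ι (x a)) / (z i * (C (ι q₁) * C (ι q₂)))))) :
    HasValueAt 0 (Jfun (C.comp ι) q₁ q₂ m r x x' n z) 0 := by
  simp only [Jfun, RingHom.comp_apply]
  rw [← mul_prod_erase _ _ (mem_range.mpr hp),
    mul_assoc _ _ (∏ i ∈ range n, ∏ j ∈ Ico (i + 1) n, _)]
  refine hasValueAt_zero_mul_inv_mul ?_ ?_ ((IsUnitAt.prod fun i hi => ?_).mul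
    (IsUnitAt.prod fun i _ => IsUnitAt.prod fun j hj => ?_))
    (RegularAt.prod fun i hi => ?_)
  · simpa using (hasValueAt_C (a := 0) ((ι q₁ * ι q₂) ^ (r * n))).1
  · have := isUnitAt_X_mul_one_sub_C_mul ((map_ne_zero ι).mpr (mul_ne_zero hq₁ hq₂)) hd
    rwa [← hpole, inv_div, ← mul_div_assoc, map_mul, map_mul] at this
  · simpa [mul_div_assoc] using (hchain i (mem_range.mp (mem_of_mem_erase hi))
      (ne_of_mem_erase hi)).isUnitAt_one_sub_C_mul (q₁ * q₂)
  · rcases hzeta i j (mem_Ico.mp hj).1 (mem_Ico.mp hj).2 with h | h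
    · exact h.isUnitAt_zetaF q₁ q₂
    · exact IsGenericAt.isUnitAt_zetaF_of_inv (by rwa [inv_div]) hq₁ hq₂
  · rw [← prod_div_distrib]
    exact RegularAt.prod fun a _ => hweight i (mem_range.mp hi) a

variable {k : ℕ} {c : {j : ℕ // j < n ∧ j ≠ k} → K}

theorem hasValueAt_zero_Jfun_of_eq_X (hq₁ : q₁ ≠ 0) (hq₂ : q₂ ≠ 0) (hm : m ≠ 0)
    (hx : ∀ a, x a ≠ 0) (hk : k < n - 1) (hc₀ : ∀ s, c s ≠ 0)
    (hc : ∀ s t, s ≠ t → ∀ a, c t / c s ≠ ι a)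
    (hz : ∀ j (h : j < n ∧ j ≠ k), z j = C (c ⟨j, h⟩)) (hzk : z k = X) :
    HasValueAt 0 (Jfun (C.comp ι) q₁ q₂ m r x x' n z) 0 := by
  have hratio : ∀ i j, i < n → j < n → i ≠ j → i ≠ k → IsGenericAt ι 0 (z j / z i) := by
    intro i j hi hj hij hik
    rw [hz i ⟨hi, hik⟩]
    rcases eq_or_ne j k with rfl | hjk
    · rw [hzk]
      exact isGenericAt_X_div_C (hc₀ _)
    · rw [hz j ⟨hj, hjk⟩]
      exact isGenericAt_C_div_C (hc _ _ (by simpa using hij))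
  have hk₁ : k + 1 < n ∧ k + 1 ≠ k := ⟨by omega, by omega⟩
  refine hasValueAt_zero_Jfun hq₁ hq₂ hk (inv_ne_zero (hc₀ ⟨k + 1, hk₁⟩)) ?_
    (fun i hi hik => hratio i (i + 1) (by omega) (by omega) (by omega) hik)
    (fun i j hij hj => ?_) (fun i hi a => ?_)
  · rw [hzk, hz _ hk₁, div_eq_mul_inv, mul_comm, map_inv₀]
  · by_cases hik : i = k
    · exact Or.inr (hratio j i hj (by omega) (by omega) (by omega))
    · exact Or.inl (hratio i j (by omega) hj (by omega) hik)
  · rcases eq_or_ne i k with rfl | hik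
    · rw [hzk]
      simpa only [map_mul] using regularAt_weight_X (b := ι (x' a))
        (mul_ne_zero ((map_ne_zero ι).mpr hm) ((map_ne_zero ι).mpr (hx a)))
        ((map_ne_zero ι).mpr (mul_ne_zero hq₁ hq₂))
    · rw [hz i ⟨hi, hik⟩]
      simpa only [map_mul] using regularAt_weight_C (a := 0) (ι (x' a)) (ι m * ι (x a))
        (c ⟨i, hi, hik⟩) (ι q₁ * ι q₂)

theorem hasValueAt_zero_Jfun_of_eq_X_inv (hq₁ : q₁ ≠ 0) (hq₂ : q₂ ≠ 0) (hk₀ : 1 ≤ k)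
    (hk : k < n) (hc₀ : ∀ s, c s ≠ 0) (hc : ∀ s t, s ≠ t → ∀ a, c t / c s ≠ ι a)
    (hz : ∀ j (h : j < n ∧ j ≠ k), z j = C (c ⟨j, h⟩)) (hzk : z k = X⁻¹) :
    HasValueAt 0 (Jfun (C.comp ι) q₁ q₂ m r x x' n z) 0 := by
  have hratio : ∀ i j, i < n → j < n → i ≠ j → j ≠ k → IsGenericAt ι 0 (z j / z i) := by
    intro i j hi hj hij hjk
    rw [hz j ⟨hj, hjk⟩]
    rcases eq_or_ne i k with rfl | hik
    · rw [hzk]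
      exact isGenericAt_C_div_X_inv _
    · rw [hz i ⟨hi, hik⟩]
      exact isGenericAt_C_div_C (hc _ _ (by simpa using hij))
  have hk₁ : k - 1 < n ∧ k - 1 ≠ k := ⟨by omega, by omega⟩
  refine hasValueAt_zero_Jfun (p := k - 1) hq₁ hq₂ (by omega) (hc₀ ⟨k - 1, hk₁⟩) ?_
    (fun i hi hik => hratio i (i + 1) (by omega) (by omega) (by omega) (by omega))
    (fun i j hij hj => ?_) (fun i hi a => ?_)
  · rw [Nat.sub_add_cancel hk₀, hzk, hz _ hk₁, div_inv_eq_mul]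
  · by_cases hjk : j = k
    · exact Or.inr (hratio j i hj (by omega) (by omega) (by omega))
    · exact Or.inl (hratio i j (by omega) hj (by omega) hjk)
  · rcases eq_or_ne i k with rfl | hik
    · rw [hzk]
      simpa only [map_mul] using regularAt_weight_X_inv (b := ι (x' a)) (e := ι m * ι (x a))
        ((map_ne_zero ι).mpr (mul_ne_zero hq₁ hq₂))
    · rw [hz i ⟨hi, hik⟩]
      simpa only [map_mul] using regularAt_weight_C (a := 0) (ι (x' a)) (ι m * ι (x a))
        (c ⟨i, hi, hik⟩) (ι q₁ * ι q₂)

end Jfun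

theorem stmt_6_general {F : Type} [Field F] (r : ℕ) (q₁ q₂ m : F)
    (x x' : Fin r → F) (hq₁ : q₁ ≠ 0) (hq₂ : q₂ ≠ 0) (hm : m ≠ 0)
    (hx : ∀ a, x a ≠ 0) (n : ℕ) :
    (∀ iv : ℕ, iv < n - 1 →
      let K := FractionRing (MvPolynomial {j : ℕ // j < n ∧ j ≠ iv} F)
      let Z : {j : ℕ // j < n ∧ j ≠ iv} → K := fun s =>
        algebraMap (MvPolynomial {j : ℕ // j < n ∧ j ≠ iv} F) K (MvPolynomial.X s)
      let ιK : F →+* K :=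
        (algebraMap (MvPolynomial {j : ℕ // j < n ∧ j ≠ iv} F) K).comp MvPolynomial.C
      let Jn : RatFunc K := Jfun ((RatFunc.C).comp ιK) q₁ q₂ m r x x' n
        (fun j => if h : j < n ∧ j ≠ iv then RatFunc.C (Z ⟨j, h⟩) else RatFunc.X)
      Polynomial.eval 0 (RatFunc.denom Jn) ≠ 0 ∧
        Polynomial.eval 0 (RatFunc.num Jn) / Polynomial.eval 0 (RatFunc.denom Jn) = 0) ∧
    (∀ iv : ℕ, 1 ≤ iv → iv < n →
      let K := FractionRing (MvPolynomial {j : ℕ // j < n ∧ j ≠ iv} F)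
      let Z : {j : ℕ // j < n ∧ j ≠ iv} → K := fun s =>
        algebraMap (MvPolynomial {j : ℕ // j < n ∧ j ≠ iv} F) K (MvPolynomial.X s)
      let ιK : F →+* K :=
        (algebraMap (MvPolynomial {j : ℕ // j < n ∧ j ≠ iv} F) K).comp MvPolynomial.C
      let Jn : RatFunc K := Jfun ((RatFunc.C).comp ιK) q₁ q₂ m r x x' n
        (fun j => if h : j < n ∧ j ≠ iv then RatFunc.C (Z ⟨j, h⟩) else RatFunc.X⁻¹)
      Polynomial.eval 0 (RatFunc.denom Jn) ≠ 0 ∧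
        Polynomial.eval 0 (RatFunc.num Jn) / Polynomial.eval 0 (RatFunc.denom Jn) = 0) := by
  -- each conclusion is `RatFunc.HasValueAt 0 Jn 0` unfolded
  refine ⟨fun iv hiv => ?_, fun iv hiv₀ hiv => ?_⟩
  · exact hasValueAt_zero_Jfun_of_eq_X hq₁ hq₂ hm hx hiv MvPolynomial.algebraMap_X_ne_zero
      (fun _ _ hst => MvPolynomial.algebraMap_X_div_X_ne hst) (fun _ h => dif_pos h)
      (dif_neg (by simp))
  · exact hasValueAt_zero_Jfun_of_eq_X_inv hq₁ hq₂ hiv₀ hiv MvPolynomial.algebraMap_X_ne_zero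
      (fun _ _ hst => MvPolynomial.algebraMap_X_div_X_ne hst) (fun _ h => dif_pos h)
      (dif_neg (by simp))

/-- For `n ≥ 2`:
(i) for each `1 ≤ i ≤ n - 1` (here `i` is the 0-based index `iv`, with `iv < n - 1`,
corresponding to the paper's variable `z_{iv+1}`), the function `J_n`, regarded as a
rational function in the single variable `z_{iv+1}` over the field generated by the
remaining variables, has no pole at `z_{iv+1} = 0` and its value there is `0`;
(ii) for each `2 ≤ i ≤ n` (0-based: `1 ≤ iv < n`), the rational function in `w` obtained
from `J_n` by substituting `z_{iv+1} = w⁻¹` has no pole at `w = 0` and its value there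
is `0`. -/
theorem stmt_6 {F : Type} [Field F] (r : ℕ) (hr : 1 ≤ r) (q₁ q₂ m : F)
    (x x' : Fin r → F) (hq₁ : q₁ ≠ 0) (hq₂ : q₂ ≠ 0) (hm : m ≠ 0)
    (hx : ∀ a, x a ≠ 0) (hx' : ∀ a, x' a ≠ 0) (n : ℕ) (hn : 2 ≤ n) :
    (∀ iv : ℕ, iv < n - 1 →
      let K := FractionRing (MvPolynomial {j : ℕ // j < n ∧ j ≠ iv} F)
      let Z : {j : ℕ // j < n ∧ j ≠ iv} → K := fun s =>
        algebraMap (MvPolynomial {j : ℕ // j < n ∧ j ≠ iv} F) K (MvPolynomial.X s)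
      let ιK : F →+* K :=
        (algebraMap (MvPolynomial {j : ℕ // j < n ∧ j ≠ iv} F) K).comp MvPolynomial.C
      let Jn : RatFunc K := Jfun ((RatFunc.C).comp ιK) q₁ q₂ m r x x' n
        (fun j => if h : j < n ∧ j ≠ iv then RatFunc.C (Z ⟨j, h⟩) else RatFunc.X)
      Polynomial.eval 0 (RatFunc.denom Jn) ≠ 0 ∧
        Polynomial.eval 0 (RatFunc.num Jn) / Polynomial.eval 0 (RatFunc.denom Jn) = 0) ∧
    (∀ iv : ℕ, 1 ≤ iv → iv < n →
      let K := FractionRing (MvPolynomial {j : ℕ // j < n ∧ j ≠ iv} F)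
      let Z : {j : ℕ // j < n ∧ j ≠ iv} → K := fun s =>
        algebraMap (MvPolynomial {j : ℕ // j < n ∧ j ≠ iv} F) K (MvPolynomial.X s)
      let ιK : F →+* K :=
        (algebraMap (MvPolynomial {j : ℕ // j < n ∧ j ≠ iv} F) K).comp MvPolynomial.C
      let Jn : RatFunc K := Jfun ((RatFunc.C).comp ιK) q₁ q₂ m r x x' n
        (fun j => if h : j < n ∧ j ≠ iv then RatFunc.C (Z ⟨j, h⟩) else RatFunc.X⁻¹)
      Polynomial.eval 0 (RatFunc.denom Jn) ≠ 0 ∧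
        Polynomial.eval 0 (RatFunc.num Jn) / Polynomial.eval 0 (RatFunc.denom Jn) = 0) :=
  stmt_6_general r q₁ q₂ m x x' hq₁ hq₂ hm hx n
end
end
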